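/- arXiv:1401.7514 — 3 statements merged into one kernel-verified Lean document; each statement's English description precedes it below -/
import Mathlib

section
/- Let M be a connected simple graph with at least 3 vertices whose maximum degree is at most 4 (a molecular graph), and let G be the line graph of M. Then GA(G) > ABC(G). -/
open SimpleGraph

/-- The first geometric-arithmetic index of a finite simple graph:
`GA(G) = Σ_{uv ∈ E(G)} 2√(dᵤ dᵥ)/(dᵤ + dᵥ)`. -/
noncomputable def GA {V : Type*} [Finite V] (G : SimpleGraph V) : ℝ := by
  classical
  have : Fintype V := Fintype.ofFinite V
  exact ∑ e ∈ G.edgeFinset,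
    Sym2.lift ⟨fun u v =>
      2 * Real.sqrt ((G.degree u : ℝ) * (G.degree v : ℝ)) /
        ((G.degree u : ℝ) + (G.degree v : ℝ)),
      fun u v => by
        dsimp only; rw [mul_comm ((G.degree u : ℝ)), add_comm ((G.degree u : ℝ))]⟩ e

/-- The atom-bond connectivity index of a finite simple graph:
`ABC(G) = Σ_{uv ∈ E(G)} √((dᵤ + dᵥ - 2)/(dᵤ dᵥ))`. -/
noncomputable def ABC {V : Type*} [Finite V] (G : SimpleGraph V) : ℝ := by
  classical
  have : Fintype V := Fintype.ofFinite V
  exact ∑ e ∈ G.edgeFinset,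
    Sym2.lift ⟨fun u v =>
      Real.sqrt (((G.degree u : ℝ) + (G.degree v : ℝ) - 2) /
        ((G.degree u : ℝ) * (G.degree v : ℝ))),
      fun u v => by
        dsimp only; rw [mul_comm ((G.degree u : ℝ)), add_comm ((G.degree u : ℝ))]⟩ e

/-- The degree of a vertex (classical wrapper around `SimpleGraph.degree`). -/
noncomputable def deg {V : Type*} [Finite V] (G : SimpleGraph V) (v : V) : ℕ := by
  classical
  have : Fintype V := Fintype.ofFinite V
  exact G.degree v

/-- The maximum degree `Δ` of a finite simple graph. -/
noncomputable def maxDeg {V : Type*} [Finite V] (G : SimpleGraph V) : ℕ := by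
  classical
  have : Fintype V := Fintype.ofFinite V
  exact G.maxDegree

/-- The minimum degree `δ` of a finite simple graph. -/
noncomputable def minDeg {V : Type*} [Finite V] (G : SimpleGraph V) : ℕ := by
  classical
  have : Fintype V := Fintype.ofFinite V
  exact G.minDegree

/-! Each edge of the line graph contributes `indexGap` of its end degrees to `GA - ABC`. Since
line-graph degrees are at most `6` and a leaf of the line graph has a neighbour of degree at most
`4`, this is positive except for edges `ef` with `deg e = 1`, `deg f = 4`. Such an `ef` comes from
a path `p x q` of `M` with `p` a leaf, `x` of degree `2` and `q` of degree `4`; the three other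
neighbours of `f` are the other edges at `q`, of degree at least `3`, and they contribute at least
`1/5` each, which outweighs `indexGap 1 4 ≥ -1/10`. To make this local, move the whole gap of `ef`
to `f`: then the sum of the gaps around every vertex is nonnegative, and positive somewhere. -/

open Finset

noncomputable def indexGap (a b : ℝ) : ℝ := 2 * √(a * b) / (a + b) - √((a + b - 2) / (a * b))

theorem indexGap_comm (a b : ℝ) : indexGap a b = indexGap b a := by
  rw [indexGap, indexGap, mul_comm a, add_comm a]

theorem indexGap_pos {a b : ℝ} (ha : 0 < a) (hb : 0 < b)
    (h : (a + b - 2) * (a + b) ^ 2 < 4 * a ^ 2 * b ^ 2) : 0 < indexGap a b := by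
  rw [indexGap, sub_pos, Real.sqrt_lt' (by positivity), div_pow, mul_pow,
    Real.sq_sqrt (by positivity), div_lt_div_iff₀ (by positivity) (by positivity)]
  nlinarith

theorem indexGap_pos_of_le_six {a b : ℕ} (ha : 1 ≤ a) (hb : 1 ≤ b) (ha6 : a ≤ 6) (hb6 : b ≤ 6)
    (ha1 : a = 1 → b ≤ 3) (hb1 : b = 1 → a ≤ 3) : 0 < indexGap a b := by
  apply indexGap_pos (by positivity) (by positivity)
  interval_cases a <;> interval_cases b <;> norm_num at *

theorem neg_one_tenth_le_indexGap_one_four : -(1 / 10) ≤ indexGap 1 4 := by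
  have h4 : √4 = 2 := by rw [show (4 : ℝ) = 2 ^ 2 by norm_num, Real.sqrt_sq (by norm_num)]
  have h3 : √3 ≤ 9 / 5 := Real.sqrt_le_iff.mpr (by norm_num)
  norm_num [indexGap, h4]
  linarith

theorem one_fifth_le_indexGap_four {b : ℝ} (hb3 : 3 ≤ b) (hb10 : b ≤ 10) :
    1 / 5 ≤ indexGap 4 b := by
  have hga : 9 / 10 ≤ 2 * √(4 * b) / (4 + b) := by
    rw [le_div_iff₀ (by linarith)]
    have : 9 / 20 * (4 + b) ≤ √(4 * b) := Real.le_sqrt_of_sq_le (by nlinarith)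
    linarith
  have habc : √((4 + b - 2) / (4 * b)) ≤ 7 / 10 := by
    rw [Real.sqrt_le_iff, div_le_iff₀ (by positivity)]
    exact ⟨by norm_num, by nlinarith⟩
  rw [indexGap]
  linarith

noncomputable def shiftedGap (a b : ℕ) : ℝ :=
  if a = 1 ∧ b = 4 then 0 else if a = 4 ∧ b = 1 then 2 * indexGap a b else indexGap a b

theorem shiftedGap_add_swap (a b : ℕ) :
    shiftedGap a b + shiftedGap b a = indexGap a b + indexGap b a := by
  unfold shiftedGap
  rw [indexGap_comm (b : ℝ)]
  split_ifs <;> first | omega | ring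

namespace SimpleGraph

section Sums

variable {W : Type*} [Fintype W] (G : SimpleGraph W) [DecidableRel G.Adj]

theorem sum_sum_neighborFinset_eq_two_nsmul {M : Type*} [AddCommMonoid M] (F : Sym2 W → M) :
    ∑ v, ∑ w ∈ G.neighborFinset v, F s(v, w) = 2 • ∑ e ∈ G.edgeFinset, F e := by
  classical
  have hdarts : ∑ d : G.Dart, F d.edge = ∑ v, ∑ w ∈ G.neighborFinset v, F s(v, w) := by
    rw [← sum_fiberwise_of_maps_to (g := fun d : G.Dart => d.fst) (t := univ) (by simp)]
    refine sum_congr rfl fun v _ => ?_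
    rw [G.dart_fst_fiber v, sum_image fun _ _ _ _ h => G.dartOfNeighborSet_injective v h]
    exact (sum_subtype _ (by simp) (fun w => F s(v, w))).symm
  rw [← hdarts, ← sum_fiberwise_of_maps_to (g := Dart.edge) (t := G.edgeFinset) (by simp),
    smul_sum]
  refine sum_congr rfl fun e he => ?_
  rw [sum_congr rfl fun d hd => congrArg F (mem_filter.mp hd).2, sum_const,
    G.dart_edge_fiber_card e (mem_edgeFinset.mp he)]

theorem sum_sum_neighborFinset_swap {M : Type*} [AddCommMonoid M] (f : W → W → M) :
    ∑ v, ∑ w ∈ G.neighborFinset v, f v w = ∑ v, ∑ w ∈ G.neighborFinset v, f w v :=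
  sum_comm' fun v w => by simp [adj_comm]

theorem sum_sum_neighborFinset_eq_of_add_swap {M : Type*} [AddCommMonoid M] [IsAddTorsionFree M]
    {f g : W → W → M} (h : ∀ v w, G.Adj v w → f v w + f w v = g v w + g w v) :
    ∑ v, ∑ w ∈ G.neighborFinset v, f v w = ∑ v, ∑ w ∈ G.neighborFinset v, g v w := by
  have hsym (k : W → W → M) : 2 • ∑ v, ∑ w ∈ G.neighborFinset v, k v w =
      ∑ v, ∑ w ∈ G.neighborFinset v, (k v w + k w v) := by
    rw [two_nsmul]
    nth_rewrite 2 [G.sum_sum_neighborFinset_swap]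
    simp only [← sum_add_distrib]
  refine IsAddTorsionFree.nsmul_right_injective two_ne_zero ?_
  simp only [hsym]
  exact sum_congr rfl fun v _ => sum_congr rfl fun w hw =>
    h v w ((mem_neighborFinset G v w).mp hw)

end Sums

section Degrees

variable {W : Type*} (G : SimpleGraph W)

theorem deg_eq_degree [Fintype W] (v : W) [Fintype (G.neighborSet v)] : deg G v = G.degree v := by
  unfold deg
  congr!

theorem card_le_deg [Finite W] {v : W} {s : Finset W} (hs : ∀ w ∈ s, G.Adj v w) :
    #s ≤ deg G v := by
  classical
  have := Fintype.ofFinite W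
  rw [deg_eq_degree, ← card_neighborFinset_eq_degree]
  exact card_le_card fun w hw => (mem_neighborFinset G v w).mpr (hs w hw)

theorem one_le_deg_of_adj [Finite W] {v w : W} (h : G.Adj v w) : 1 ≤ deg G v := by
  simpa using G.card_le_deg (s := {w}) (by simpa using h)

theorem two_le_deg [Finite W] {v p q : W} (hpq : p ≠ q) (hp : G.Adj v p) (hq : G.Adj v q) :
    2 ≤ deg G v := by
  classical
  simpa [card_pair hpq] using G.card_le_deg (s := {p, q}) (by simp [hp, hq])

theorem GA_sub_ABC [Fintype W] [DecidableRel G.Adj] :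
    GA G - ABC G = (∑ v, ∑ w ∈ G.neighborFinset v, indexGap (deg G v) (deg G w)) / 2 := by
  let F : Sym2 W → ℝ := Sym2.lift ⟨fun v w => indexGap (deg G v) (deg G w),
    fun v w => indexGap_comm _ _⟩
  have hF : GA G - ABC G = ∑ e ∈ G.edgeFinset, F e := by
    simp only [GA, ABC]
    rw [← sum_sub_distrib]
    refine sum_congr (by ext; simp) fun e _ => ?_
    induction e using Sym2.ind
    simp only [F, Sym2.lift_mk, indexGap, deg_eq_degree]
    congr!
  have h2 := G.sum_sum_neighborFinset_eq_two_nsmul F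
  simp only [F, Sym2.lift_mk] at h2
  rw [hF, h2, nsmul_eq_mul]
  ring

end Degrees

structure MolecularLineDegrees {W : Type*} [Finite W] (G : SimpleGraph W) : Prop where
  deg_le_six (v : W) : deg G v ≤ 6
  deg_le_four_of_adj_leaf {v w : W} : G.Adj v w → deg G v = 1 → deg G w ≤ 4
  three_le_deg {v w x : W} :
    G.Adj v w → deg G v = 1 → deg G w = 4 → G.Adj w x → x ≠ v → 3 ≤ deg G x

namespace MolecularLineDegrees

section

variable {W : Type*} [Finite W] {G : SimpleGraph W} (hG : G.MolecularLineDegrees)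
include hG

theorem shiftedGap_pos {v w : W} (hvw : G.Adj v w) (h14 : ¬(deg G v = 1 ∧ deg G w = 4))
    (h41 : ¬(deg G v = 4 ∧ deg G w = 1)) : 0 < shiftedGap (deg G v) (deg G w) := by
  have hv := hG.deg_le_four_of_adj_leaf hvw
  have hw := hG.deg_le_four_of_adj_leaf hvw.symm
  rw [shiftedGap, if_neg h14, if_neg h41]
  exact indexGap_pos_of_le_six (G.one_le_deg_of_adj hvw) (G.one_le_deg_of_adj hvw.symm)
    (hG.deg_le_six v) (hG.deg_le_six w) (by omega) (by omega)

theorem shiftedGap_nonneg {v w : W} (hvw : G.Adj v w) (h41 : ¬(deg G v = 4 ∧ deg G w = 1)) :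
    0 ≤ shiftedGap (deg G v) (deg G w) := by
  by_cases h14 : deg G v = 1 ∧ deg G w = 4
  · simp [shiftedGap, h14]
  · exact (hG.shiftedGap_pos hvw h14 h41).le

end

section

variable {W : Type*} [Fintype W] {G : SimpleGraph W} (hG : G.MolecularLineDegrees)
include hG

theorem sum_shiftedGap_pos_of_adj_leaf [DecidableRel G.Adj] {v e : W} (hv : deg G v = 4)
    (hve : G.Adj v e) (he : deg G e = 1) :
    0 < ∑ w ∈ G.neighborFinset v, shiftedGap (deg G v) (deg G w) := by
  classical
  have hmem : e ∈ G.neighborFinset v := (mem_neighborFinset G v e).mpr hve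
  have hcard : ((G.neighborFinset v).erase e).card = 3 := by
    rw [card_erase_of_mem hmem, card_neighborFinset_eq_degree, ← deg_eq_degree, hv]
  have hrest : ∀ w ∈ (G.neighborFinset v).erase e, 1 / 5 ≤ shiftedGap (deg G v) (deg G w) := by
    intro w hw
    obtain ⟨hwe, hvw⟩ := mem_erase.mp hw
    have h3 := hG.three_le_deg hve.symm he hv ((mem_neighborFinset G v w).mp hvw) hwe
    have h6 := hG.deg_le_six w
    rw [shiftedGap, hv, if_neg (by omega), if_neg (by omega)]
    exact one_fifth_le_indexGap_four (by exact_mod_cast h3) (by norm_cast; omega)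
  have hsum := card_nsmul_le_sum _ _ _ hrest
  rw [hcard, nsmul_eq_mul] at hsum
  have hleaf : shiftedGap (deg G v) (deg G e) = 2 * indexGap 1 4 := by
    rw [shiftedGap, hv, he, indexGap_comm]
    norm_num
  rw [← add_sum_erase _ _ hmem, hleaf]
  linarith [neg_one_tenth_le_indexGap_one_four]

theorem sum_shiftedGap_nonneg [DecidableRel G.Adj] (v : W) :
    0 ≤ ∑ w ∈ G.neighborFinset v, shiftedGap (deg G v) (deg G w) := by
  by_cases hleaf : deg G v = 4 ∧ ∃ e, G.Adj v e ∧ deg G e = 1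
  · obtain ⟨hv, e, hve, he⟩ := hleaf
    exact (hG.sum_shiftedGap_pos_of_adj_leaf hv hve he).le
  · refine sum_nonneg fun w hw => hG.shiftedGap_nonneg ((mem_neighborFinset G v w).mp hw) ?_
    exact fun h41 => hleaf ⟨h41.1, w, (mem_neighborFinset G v w).mp hw, h41.2⟩

theorem sum_shiftedGap_pos [DecidableRel G.Adj] {v w : W} (hvw : G.Adj v w)
    (h14 : ¬(deg G v = 1 ∧ deg G w = 4)) :
    0 < ∑ u ∈ G.neighborFinset v, shiftedGap (deg G v) (deg G u) := by
  by_cases hleaf : deg G v = 4 ∧ ∃ e, G.Adj v e ∧ deg G e = 1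
  · obtain ⟨hv, e, hve, he⟩ := hleaf
    exact hG.sum_shiftedGap_pos_of_adj_leaf hv hve he
  · have h41 : ¬(deg G v = 4 ∧ deg G w = 1) := fun h41 => hleaf ⟨h41.1, w, hvw, h41.2⟩
    refine sum_pos' (fun u hu => hG.shiftedGap_nonneg ((mem_neighborFinset G v u).mp hu) ?_)
      ⟨w, (mem_neighborFinset G v w).mpr hvw, hG.shiftedGap_pos hvw h14 h41⟩
    exact fun h41 => hleaf ⟨h41.1, u, (mem_neighborFinset G v u).mp hu, h41.2⟩

end

theorem abc_lt_ga {W : Type*} [Finite W] {G : SimpleGraph W} (hG : G.MolecularLineDegrees)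
    {v w : W} (hvw : G.Adj v w) : ABC G < GA G := by
  classical
  have := Fintype.ofFinite W
  rw [← sub_pos, GA_sub_ABC, G.sum_sum_neighborFinset_eq_of_add_swap
    (g := fun v w => shiftedGap (deg G v) (deg G w)) fun v w _ => (shiftedGap_add_swap _ _).symm]
  refine half_pos (sum_pos' (fun u _ => hG.sum_shiftedGap_nonneg u) ?_)
  by_cases h14 : deg G v = 1 ∧ deg G w = 4
  · exact ⟨w, mem_univ w, hG.sum_shiftedGap_pos hvw.symm (by omega)⟩
  · exact ⟨v, mem_univ v, hG.sum_shiftedGap_pos hvw h14⟩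

end MolecularLineDegrees

section LineGraph

variable {V : Type*} (M : SimpleGraph V)

theorem exists_eq_of_lineGraph_adj {e f : M.edgeSet} (h : M.lineGraph.Adj e f) :
    ∃ x p q, p ≠ q ∧ M.Adj x p ∧ M.Adj x q ∧ (e : Sym2 V) = s(x, p) ∧ (f : Sym2 V) = s(x, q) := by
  obtain ⟨hne, x, hxe, hxf⟩ := lineGraph_adj_iff_exists.mp h
  obtain ⟨p, hp⟩ := Sym2.mem_iff_exists.mp hxe
  obtain ⟨q, hq⟩ := Sym2.mem_iff_exists.mp hxf
  refine ⟨x, p, q, ?_, M.mem_edgeSet.mp (hp ▸ e.2), M.mem_edgeSet.mp (hq ▸ f.2), hp, hq⟩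
  rintro rfl
  exact hne (Subtype.ext (hp.trans hq.symm))

theorem deg_lineGraph [Finite V] {e : M.edgeSet} {u v : V} (he : (e : Sym2 V) = s(u, v)) :
    deg M.lineGraph e = deg M u + deg M v - 2 := by
  classical
  have := Fintype.ofFinite V
  have hadj : M.Adj u v := M.mem_edgeSet.mp (he ▸ e.2)
  have hnbr : (M.lineGraph.neighborFinset e).map (Function.Embedding.subtype _) =
      (M.incidenceFinset u ∪ M.incidenceFinset v).erase e := by
    ext f
    simp only [mem_map, mem_neighborFinset, lineGraph_adj_iff_exists, mem_erase, mem_union,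
      Function.Embedding.coe_subtype, mem_incidenceFinset, incidenceSet, Set.mem_ofPred_eq]
    constructor
    · rintro ⟨⟨g, hg⟩, ⟨hne, x, hxe, hxg⟩, rfl⟩
      refine ⟨fun h => hne (Subtype.ext h.symm), ?_⟩
      rcases Sym2.mem_iff.mp (he ▸ hxe) with rfl | rfl
      · exact Or.inl ⟨hg, hxg⟩
      · exact Or.inr ⟨hg, hxg⟩
    · rintro ⟨hne, ⟨hf, hu⟩ | ⟨hf, hv⟩⟩
      · exact ⟨⟨f, hf⟩, ⟨fun h => hne (congrArg Subtype.val h).symm, u,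
          he ▸ Sym2.mem_mk_left u v, hu⟩, rfl⟩
      · exact ⟨⟨f, hf⟩, ⟨fun h => hne (congrArg Subtype.val h).symm, v,
          he ▸ Sym2.mem_mk_right u v, hv⟩, rfl⟩
  have hinter : M.incidenceFinset u ∩ M.incidenceFinset v = {(e : Sym2 V)} := by
    ext f
    rw [mem_inter, mem_incidenceFinset, mem_incidenceFinset, ← Set.mem_inter_iff,
      M.incidenceSet_inter_incidenceSet_of_adj hadj, he, mem_singleton, Set.mem_singleton_iff]
  have hunion := card_union_add_card_inter (M.incidenceFinset u) (M.incidenceFinset v)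
  have he_mem : (e : Sym2 V) ∈ M.incidenceFinset u := by
    rw [mem_incidenceFinset, he]
    exact M.mk'_mem_incidenceSet_left_iff.mpr hadj
  rw [hinter, card_singleton, card_incidenceFinset_eq_degree, card_incidenceFinset_eq_degree]
    at hunion
  rw [deg_eq_degree, deg_eq_degree, deg_eq_degree, ← card_neighborFinset_eq_degree, ← card_map,
    hnbr, card_erase_of_mem (mem_union_left _ he_mem)]
  omega

theorem molecularLineDegrees_lineGraph [Finite V] (hmol : ∀ v, deg M v ≤ 4) :
    M.lineGraph.MolecularLineDegrees where
  deg_le_six e := by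
    rcases e with ⟨⟨u, v⟩, he⟩
    rw [M.deg_lineGraph (e := ⟨_, he⟩) rfl]
    have := hmol u
    have := hmol v
    omega
  deg_le_four_of_adj_leaf {e f} hef he1 := by
    obtain ⟨x, p, q, hpq, hxp, hxq, hep, hfq⟩ := M.exists_eq_of_lineGraph_adj hef
    rw [M.deg_lineGraph hep] at he1
    rw [M.deg_lineGraph hfq]
    have hx2 := M.two_le_deg hpq hxp hxq
    have := M.one_le_deg_of_adj hxp.symm
    have := hmol q
    omega
  three_le_deg {e f g} hef he1 hf4 hfg hge := by
    obtain ⟨x, p, q, hpq, hxp, hxq, hep, hfq⟩ := M.exists_eq_of_lineGraph_adj hef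
    obtain ⟨y, q', r, hq'r, -, hyr, hfq', hgr⟩ := M.exists_eq_of_lineGraph_adj hfg
    rw [M.deg_lineGraph hep] at he1
    rw [M.deg_lineGraph hfq] at hf4
    rw [M.deg_lineGraph hgr]
    have hx2 := M.two_le_deg hpq hxp hxq
    have := M.one_le_deg_of_adj hxp.symm
    have := M.one_le_deg_of_adj hyr.symm
    have hy : y ∈ s(x, q) := hfq ▸ hfq' ▸ Sym2.mem_mk_left y q'
    rcases Sym2.mem_iff.mp hy with rfl | rfl
    · obtain rfl : q = q' := Sym2.congr_right.mp (hfq.symm.trans hfq')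
      have hrp : r ≠ p := by
        rintro rfl
        exact hge (Subtype.ext (hgr.trans hep.symm))
      have hx3 : 3 ≤ deg M y := by
        classical
        have hcard : #{p, q, r} = 3 := card_eq_three.mpr ⟨p, q, r, hpq, hrp.symm, hq'r, rfl⟩
        simpa [hcard] using M.card_le_deg (s := {p, q, r}) (by simp [hxp, hxq, hyr])
      omega
    · omega

theorem Reachable.exists_adj_adj_of_not_adj {u v : V} (hr : M.Reachable u v) (huv : u ≠ v)
    (hnadj : ¬M.Adj u v) : ∃ x p q, p ≠ q ∧ M.Adj x p ∧ M.Adj x q := by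
  obtain ⟨w, hw⟩ := hr.exists_walk_length_eq_dist
  have h1 : 1 < M.dist u v := by
    have := hr.dist_eq_zero_iff.not.mpr huv
    have := dist_eq_one_iff_adj.not.mpr hnadj
    omega
  obtain ⟨x, a, b, hxa, hab, -, hxb⟩ := w.exists_adj_adj_not_adj_ne hw h1
  exact ⟨a, x, b, hxb, hxa.symm, hab⟩

theorem Connected.exists_adj_adj_of_three_le_card [Fintype V] (hconn : M.Connected)
    (h3 : 3 ≤ Fintype.card V) : ∃ x p q, p ≠ q ∧ M.Adj x p ∧ M.Adj x q := by
  obtain ⟨a, b, c, hab, hac, hbc⟩ := Fintype.two_lt_card_iff.mp h3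
  by_cases hb : M.Adj a b
  · by_cases hc : M.Adj a c
    · exact ⟨a, b, c, hbc, hb, hc⟩
    · exact (hconn.preconnected a c).exists_adj_adj_of_not_adj M hac hc
  · exact (hconn.preconnected a b).exists_adj_adj_of_not_adj M hab hb

end LineGraph

end SimpleGraph

/-- If `M` is a connected molecular graph (maximum degree at most `4`)
with at least `3` vertices and `G` is the line graph of `M`, then `GA(G) > ABC(G)`. -/
theorem stmt_1 {V : Type*} [Fintype V] (M : SimpleGraph V)
    (hconn : M.Connected) (hn : 3 ≤ Fintype.card V)
    (hmol : ∀ v : V, deg M v ≤ 4) :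
    ABC M.lineGraph < GA M.lineGraph := by
  obtain ⟨x, p, q, hpq, hxp, hxq⟩ := hconn.exists_adj_adj_of_three_le_card M hn
  refine (M.molecularLineDegrees_lineGraph hmol).abc_lt_ga
    (v := ⟨s(x, p), hxp⟩) (w := ⟨s(x, q), hxq⟩) ?_
  exact lineGraph_adj_iff_exists.mpr
    ⟨fun h => hpq (Sym2.congr_right.mp (congrArg Subtype.val h)), x, by simp, by simp⟩
end

section
/- Let G be a connected simple graph with minimum degree δ ≥ 2 such that |d_u − d_v| ≤ (2δ − 1)² for every edge uv of G. Then GA(G) > ABC(G). -/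
open SimpleGraph

/-! Both indices are sums over the edges, so it suffices to compare the summands edge by edge.
Squaring, the comparison for an edge with degrees `a ≤ b` is `(a + b - 2)(a + b)² < 4a²b²`, which
holds as long as `b - a ≤ (2a - 1)²`; and `δ ≤ a` turns the hypothesis into this bound. A graph
with `δ ≥ 2` on a nonempty vertex set has an edge, so the inequality is strict. -/

lemma sqrt_abc_term_lt_ga_term {a b : ℝ} (ha : 2 ≤ a) (hab : a ≤ b) (hb : b ≤ a + (2 * a - 1) ^ 2) :
    √((a + b - 2) / (a * b)) < 2 * √(a * b) / (a + b) := by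
  have ha0 : 0 < a := by linarith
  have hb0 : 0 < b := by linarith
  have hsum : 0 < a + b := by linarith
  have hsq : (a + b - 2) / (a * b) < 4 * (a * b) / (a + b) ^ 2 := by
    rw [div_lt_div_iff₀ (by positivity) (by positivity)]
    nlinarith [sq_nonneg (b - a), sq_nonneg (a - 2), sq_nonneg (a * b - a - b),
      mul_nonneg (sub_nonneg.2 hab) (sub_nonneg.2 hb), mul_pos ha0 hb0]
  calc √((a + b - 2) / (a * b)) < √(4 * (a * b) / (a + b) ^ 2) :=
        Real.sqrt_lt_sqrt (div_nonneg (by linarith) (by positivity)) hsq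
    _ = 2 * √(a * b) / (a + b) := by
        rw [Real.sqrt_div (by positivity), Real.sqrt_mul (by norm_num),
          show (4 : ℝ) = 2 ^ 2 by norm_num, Real.sqrt_sq (by norm_num), Real.sqrt_sq hsum.le]

lemma sqrt_abc_term_lt_ga_term_of_abs_sub_le {δ a b : ℝ} (hδ : 2 ≤ δ) (ha : δ ≤ a) (hb : δ ≤ b)
    (hab : |a - b| ≤ (2 * δ - 1) ^ 2) :
    √((a + b - 2) / (a * b)) < 2 * √(a * b) / (a + b) := by
  wlog hle : a ≤ b generalizing a b
  · rw [add_comm a, mul_comm a]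
    exact this hb ha (by rwa [abs_sub_comm]) (by linarith)
  refine sqrt_abc_term_lt_ga_term (by linarith) hle ?_
  have hδ' : (2 * δ - 1) ^ 2 ≤ (2 * a - 1) ^ 2 := by nlinarith
  linarith [neg_abs_le (a - b)]

lemma deg_eq_degree {V : Type*} [Fintype V] (G : SimpleGraph V) [DecidableRel G.Adj] (v : V) :
    deg G v = G.degree v := by
  unfold deg; congr!

lemma minDeg_eq_minDegree {V : Type*} [Fintype V] (G : SimpleGraph V) [DecidableRel G.Adj] :
    minDeg G = G.minDegree := by
  unfold minDeg; congr!

lemma GA_eq_sum {V : Type*} [Fintype V] (G : SimpleGraph V) [DecidableRel G.Adj] :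
    GA G = ∑ e ∈ G.edgeFinset, Sym2.lift ⟨fun u v =>
      2 * √((G.degree u : ℝ) * G.degree v) / ((G.degree u : ℝ) + G.degree v),
      fun u v => by dsimp only; rw [mul_comm (G.degree u : ℝ), add_comm (G.degree u : ℝ)]⟩ e := by
  unfold GA; congr!

lemma ABC_eq_sum {V : Type*} [Fintype V] (G : SimpleGraph V) [DecidableRel G.Adj] :
    ABC G = ∑ e ∈ G.edgeFinset, Sym2.lift ⟨fun u v =>
      √(((G.degree u : ℝ) + G.degree v - 2) / ((G.degree u : ℝ) * G.degree v)),
      fun u v => by dsimp only; rw [mul_comm, add_comm (G.degree u : ℝ)]⟩ e := by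
  unfold ABC; congr!

lemma SimpleGraph.edgeFinset_nonempty_of_minDegree_pos {V : Type*} [Fintype V] [Nonempty V]
    {G : SimpleGraph V} [DecidableRel G.Adj] (h : 0 < G.minDegree) : G.edgeFinset.Nonempty := by
  obtain ⟨v⟩ := ‹Nonempty V›
  obtain ⟨w, hvw⟩ := G.degree_pos_iff_exists_adj v |>.mp (h.trans_le (G.minDegree_le_degree v))
  exact ⟨s(v, w), G.mem_edgeFinset.mpr hvw⟩

/-- If `G` is a connected graph with minimum degree `δ ≥ 2` such that
`|dᵤ − dᵥ| ≤ (2δ − 1)²` for every edge `uv` of `G`, then `GA(G) > ABC(G)`. -/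
theorem stmt_7 {V : Type*} [Fintype V] (G : SimpleGraph V)
    (hconn : G.Connected) (hδ : 2 ≤ minDeg G)
    (h : ∀ u v : V, G.Adj u v →
      ((deg G u : ℤ) - (deg G v : ℤ)).natAbs ≤ (2 * minDeg G - 1)^2) :
    ABC G < GA G := by
  classical
  have : Nonempty V := hconn.nonempty
  simp only [deg_eq_degree, minDeg_eq_minDegree] at h hδ
  rw [ABC_eq_sum, GA_eq_sum]
  refine Finset.sum_lt_sum_of_nonempty (edgeFinset_nonempty_of_minDegree_pos (by omega)) ?_
  intro e he
  induction e using Sym2.ind with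
  | _ u v =>
    have huv : |(G.degree u : ℝ) - G.degree v| ≤ (2 * G.minDegree - 1) ^ 2 := by
      have hint := h u v (G.mem_edgeFinset.mp he)
      zify [show 1 ≤ 2 * G.minDegree by omega] at hint
      exact_mod_cast hint
    exact sqrt_abc_term_lt_ga_term_of_abs_sub_le (δ := G.minDegree) (by exact_mod_cast hδ)
      (by exact_mod_cast G.minDegree_le_degree u) (by exact_mod_cast G.minDegree_le_degree v) huv
end

section
/- For the wheel graph W_n, GA(W_n) < ABC(W_n) for every integer n ≥ 195; explicitly, 1 + 2√(3(n−1))/(n+2) < 2/3 + √(n/(3(n−1))) for n ≥ 195. -/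
open SimpleGraph

/-- The wheel graph on `m + 1` vertices: a hub vertex `none` joined to every vertex of the
cycle `C_m` on the rim vertices `some a`, `a : Fin m`. For `n ≥ 4`, the wheel `W_n` on `n`
vertices is `wheelGraph (n - 1)`. -/
def wheelGraph (m : ℕ) : SimpleGraph (Option (Fin m)) :=
  SimpleGraph.fromRel (fun u v =>
    u = none ∨ ∃ a b : Fin m, u = some a ∧ v = some b ∧ (cycleGraph m).Adj a b)

/-!
Every edge of the wheel `W_{m+1}` with `m ≥ 3` rim vertices is either a spoke, with end degrees
`(m, 3)`, or a rim edge, with end degrees `(3, 3)`, and there are `m` of each. Hence both indices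
are `m` times a sum of two edge weights, and `GA < ABC` is the inequality between these factors.
Writing `s = √(3m)`, so that `m = s²/3`, clearing denominators and squaring once turns it into
the polynomial inequality `s²(s² + 18s + 9)² < 3(s² + 3)(s² + 9)²`, which holds once
`s² ≥ 582`, i.e. `m ≥ 194`.
-/

open Finset

namespace SimpleGraph

section EdgeSums

variable {V : Type*} (G : SimpleGraph V) [Fintype V] [DecidableRel G.Adj]

lemma two_nsmul_sum_edgeFinset_lift {M : Type*} [AddCommMonoid M] (f : V → V → M)
    (hf : ∀ v w, f v w = f w v) :
    2 • ∑ e ∈ G.edgeFinset, Sym2.lift ⟨f, hf⟩ e = ∑ v, ∑ w ∈ G.neighborFinset v, f v w := by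
  classical
  calc 2 • ∑ e ∈ G.edgeFinset, Sym2.lift ⟨f, hf⟩ e
      = ∑ e ∈ G.edgeFinset, ∑ d ∈ {d : G.Dart | d.edge = e}, Sym2.lift ⟨f, hf⟩ d.edge := by
        rw [smul_sum]
        refine sum_congr rfl fun e he => ?_
        rw [sum_congr rfl fun d hd => congrArg _ (mem_filter.1 hd).2, sum_const,
          G.dart_edge_fiber_card e (mem_edgeFinset.1 he)]
    _ = ∑ d : G.Dart, f d.fst d.snd :=
        sum_fiberwise_of_maps_to (fun d _ => mem_edgeFinset.2 d.edge_mem) _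
    _ = ∑ v, ∑ d ∈ {d : G.Dart | d.fst = v}, f d.fst d.snd := (sum_fiberwise _ _ _).symm
    _ = ∑ v, ∑ w ∈ G.neighborFinset v, f v w := by
        refine sum_congr rfl fun v _ => ?_
        rw [G.dart_fst_fiber v, sum_image fun _ _ _ _ h => G.dartOfNeighborSet_injective v h]
        exact (sum_subtype _ (fun w => mem_neighborFinset G v w) (f v)).symm

lemma two_mul_GA : 2 * GA G = ∑ v, ∑ w ∈ G.neighborFinset v,
    2 * √((G.degree v : ℝ) * G.degree w) / (G.degree v + G.degree w) := by
  rw [GA, two_mul, ← two_nsmul]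
  convert G.two_nsmul_sum_edgeFinset_lift _ fun u v => ?_
  ring_nf

lemma two_mul_ABC : 2 * ABC G = ∑ v, ∑ w ∈ G.neighborFinset v,
    √(((G.degree v : ℝ) + G.degree w - 2) / (G.degree v * G.degree w)) := by
  rw [ABC, two_mul, ← two_nsmul]
  convert G.two_nsmul_sum_edgeFinset_lift _ fun u v => ?_
  ring_nf

end EdgeSums

section Wheel

variable {m : ℕ}

lemma wheelGraph_adj_none_some (a : Fin m) : (wheelGraph m).Adj none (some a) := by
  simp [wheelGraph]

lemma wheelGraph_adj_some_some {a b : Fin m} :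
    (wheelGraph m).Adj (some a) (some b) ↔ (cycleGraph m).Adj a b := by
  simp only [wheelGraph, fromRel_adj, Option.some.injEq, reduceCtorEq, false_or,
    exists_and_left, exists_eq_left', (cycleGraph m).adj_comm b a, or_self]
  exact and_iff_right_of_imp fun h => Option.some_injective _ |>.ne h.ne

variable [DecidableRel (wheelGraph m).Adj]

lemma wheelGraph_neighborFinset_none :
    (wheelGraph m).neighborFinset none = univ.image some := by
  ext (_ | a)
  · simp
  · simp [wheelGraph_adj_none_some]

lemma wheelGraph_neighborFinset_some (a : Fin m) :
    (wheelGraph m).neighborFinset (some a) =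
      insert none (((cycleGraph m).neighborFinset a).image some) := by
  ext (_ | b)
  · simp [(wheelGraph_adj_none_some a).symm]
  · simp [wheelGraph_adj_some_some]

lemma wheelGraph_degree_none : (wheelGraph m).degree none = m := by
  rw [← card_neighborFinset_eq_degree, wheelGraph_neighborFinset_none,
    card_image_of_injective _ (Option.some_injective _), card_univ, Fintype.card_fin]

lemma wheelGraph_degree_some (hm : 3 ≤ m) (a : Fin m) : (wheelGraph m).degree (some a) = 3 := by
  obtain ⟨k, rfl⟩ := Nat.exists_eq_add_of_le' hm
  rw [← card_neighborFinset_eq_degree, wheelGraph_neighborFinset_some,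
    card_insert_of_notMem (by simp), card_image_of_injective _ (Option.some_injective _),
    card_neighborFinset_eq_degree, cycleGraph_degree_three_le]

lemma sum_neighborFinset_wheelGraph (hm : 3 ≤ m) (f : ℕ → ℕ → ℝ) :
    ∑ v, ∑ w ∈ (wheelGraph m).neighborFinset v,
      f ((wheelGraph m).degree v) ((wheelGraph m).degree w) = m * (f m 3 + f 3 m + 2 * f 3 3) := by
  obtain ⟨k, rfl⟩ := Nat.exists_eq_add_of_le' hm
  simp only [Fintype.sum_option, wheelGraph_neighborFinset_none, wheelGraph_neighborFinset_some,
    sum_insert (show none ∉ image some _ by simp),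
    sum_image fun _ _ _ _ h => Option.some_injective _ h]
  simp only [wheelGraph_degree_none, wheelGraph_degree_some hm, sum_const, card_univ,
    Fintype.card_fin, card_neighborFinset_eq_degree, cycleGraph_degree_three_le, nsmul_eq_mul]
  push_cast
  ring

end Wheel

end SimpleGraph

lemma GA_wheelGraph {m : ℕ} (hm : 3 ≤ m) :
    GA (wheelGraph m) = m * (1 + 2 * √(3 * m) / (m + 3)) := by
  classical
  have h := (wheelGraph m).two_mul_GA.trans
    (sum_neighborFinset_wheelGraph hm fun d e => 2 * √((d : ℝ) * e) / (d + e))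
  have hsqrt9 : √((3 : ℝ) * 3) = 3 := Real.sqrt_mul_self (by norm_num)
  push_cast at h
  rw [hsqrt9, mul_comm (m : ℝ) 3, add_comm 3 (m : ℝ)] at h
  linarith

lemma ABC_wheelGraph {m : ℕ} (hm : 3 ≤ m) :
    ABC (wheelGraph m) = m * (2 / 3 + √((m + 1) / (3 * m))) := by
  classical
  have h := (wheelGraph m).two_mul_ABC.trans
    (sum_neighborFinset_wheelGraph hm fun d e => √(((d : ℝ) + e - 2) / (d * e)))
  have hsqrt49 : √(((3 : ℝ) + 3 - 2) / (3 * 3)) = 2 / 3 := by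
    rw [show ((3 : ℝ) + 3 - 2) / (3 * 3) = (2 / 3) ^ 2 by norm_num, Real.sqrt_sq (by norm_num)]
  push_cast at h
  rw [hsqrt49, mul_comm (m : ℝ) 3, show (m : ℝ) + 3 - 2 = m + 1 by ring,
    show 3 + (m : ℝ) - 2 = m + 1 by ring] at h
  linarith

lemma wheel_polynomial_lt {s : ℝ} (hs : 582 ≤ s ^ 2) (hs0 : 0 ≤ s) :
    s ^ 2 * (s ^ 2 + 18 * s + 9) ^ 2 < 3 * (s ^ 2 + 3) * (s ^ 2 + 9) ^ 2 := by
  -- `√582 ≈ 24.12`, while the real root of the cubic below is `≈ 24.07`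
  have hs1 : 241 / 10 ≤ s := by nlinarith
  have hcubic : 0 < 2 * s ^ 3 - 36 * s ^ 2 - 279 * s - 324 := by
    nlinarith [mul_nonneg (sub_nonneg.2 hs1) (sub_nonneg.2 hs1)]
  have hs3 : 0 < s ^ 3 := by positivity
  have hdiff : 3 * (s ^ 2 + 3) * (s ^ 2 + 9) ^ 2 - s ^ 2 * (s ^ 2 + 18 * s + 9) ^ 2 =
      s ^ 3 * (2 * s ^ 3 - 36 * s ^ 2 - 279 * s - 324) + 324 * s ^ 2 + 729 := by ring
  linarith [mul_pos hs3 hcubic]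

lemma wheel_GA_factor_lt_ABC_factor {m : ℝ} (hm : 194 ≤ m) :
    1 + 2 * √(3 * m) / (m + 3) < 2 / 3 + √((m + 1) / (3 * m)) := by
  obtain ⟨s, hs0, rfl⟩ : ∃ s, 0 ≤ s ∧ m = s ^ 2 / 3 :=
    ⟨√(3 * m), Real.sqrt_nonneg _, by rw [Real.sq_sqrt (by linarith)]; ring⟩
  have hs : 582 ≤ s ^ 2 := by linarith
  have hs_pos : 0 < s := by nlinarith
  set r := √(s ^ 2 / 3 + 1)
  have hr : r ^ 2 = s ^ 2 / 3 + 1 := Real.sq_sqrt (by positivity)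
  rw [Real.sqrt_div' _ (by positivity), show 3 * (s ^ 2 / 3) = s ^ 2 by ring,
    Real.sqrt_sq hs0]
  have hcleared : s * (s ^ 2 / 3 + 3 + 6 * s) < 3 * r * (s ^ 2 / 3 + 3) := by
    refine lt_of_pow_lt_pow_left₀ 2 (by positivity) ?_
    rw [mul_pow, mul_pow, mul_pow, hr]
    nlinarith [wheel_polynomial_lt hs hs0]
  have hdiff : 2 / 3 + r / s - (1 + 2 * s / (s ^ 2 / 3 + 3)) =
      (3 * r * (s ^ 2 / 3 + 3) - s * (s ^ 2 / 3 + 3 + 6 * s)) / (3 * s * (s ^ 2 / 3 + 3)) := by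
    field_simp
    ring
  rw [← sub_pos, hdiff]
  exact div_pos (by linarith) (by positivity)

/-- For every integer `n ≥ 195`, the wheel graph `W_n` satisfies
`GA(W_n) < ABC(W_n)`; explicitly, `1 + 2√(3(n−1))/(n+2) < 2/3 + √(n/(3(n−1)))`. -/
theorem stmt_17 (n : ℕ) (hn : 195 ≤ n) :
    GA (wheelGraph (n - 1)) < ABC (wheelGraph (n - 1)) ∧
    1 + 2 * Real.sqrt (3 * ((n : ℝ) - 1)) / ((n : ℝ) + 2) <
      (2 : ℝ)/3 + Real.sqrt ((n : ℝ) / (3 * ((n : ℝ) - 1))) := by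
  have hn' : (195 : ℝ) ≤ n := by exact_mod_cast hn
  have hm : 3 ≤ n - 1 := by omega
  have hcast : ((n - 1 : ℕ) : ℝ) = n - 1 := by rw [Nat.cast_sub (by omega), Nat.cast_one]
  have hlt := wheel_GA_factor_lt_ABC_factor (m := (n : ℝ) - 1) (by linarith)
  rw [show (n : ℝ) - 1 + 3 = n + 2 by ring, sub_add_cancel] at hlt
  refine ⟨?_, hlt⟩
  rw [GA_wheelGraph hm, ABC_wheelGraph hm, hcast, show (n : ℝ) - 1 + 3 = n + 2 by ring,
    sub_add_cancel]
  exact mul_lt_mul_of_pos_left hlt (by linarith)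
end
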